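/- Let Σ : ℝⁿ × ℝⁿ → ℝ be of class C⁴ and suppose that for all (x,x') the n×n matrix with entries Σ_{is'}(x,x') = ∂²Σ/∂xⁱ∂x'ˢ is invertible; let Σ^{is'} denote the entries of its inverse, characterized by Σ_s Σ^{is'}Σ_{ls'} = δⁱₗ. Define the Christoffel symbol Γⁱ_{kl}(x,x') = Σ_s Σ^{is'}(x,x') · ∂³Σ/∂xᵏ∂xˡ∂x'ˢ(x,x'). Then the Riemann–Christoffel curvature expression built from Γ with derivatives in x vanishes identically: for all (x,x') and all indices, R^s_{ilm} := ∂Γ^s_{il}/∂xᵐ − ∂Γ^s_{im}/∂xˡ + Σⱼ (Γʲ_{il}Γ^s_{jm} − Γʲ_{im}Γ^s_{jl}) = 0. -/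

import Mathlib

open Matrix

/-- Partial derivative `∂f/∂xⁱ` of a function `f : ℝⁿ → ℝ` at the point `x`. -/
noncomputable def pd (n : ℕ) (i : Fin n) (f : (Fin n → ℝ) → ℝ) (x : Fin n → ℝ) : ℝ :=
  fderiv ℝ f x (Pi.single i 1)

/-- The covariant fundamental metric tensor `Σ_{is'}(x,x') = ∂²Σ/∂xⁱ∂x'ˢ`. -/
noncomputable def Sig2 (n : ℕ) (W : (Fin n → ℝ) → (Fin n → ℝ) → ℝ)
    (x x' : Fin n → ℝ) : Matrix (Fin n) (Fin n) ℝ :=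
  Matrix.of fun i s => pd n i (fun z => pd n s (fun w => W z w) x') x

/-- The third derivative `Σ_{,kls'}(x,x') = ∂³Σ/∂xᵏ∂xˡ∂x'ˢ`. -/
noncomputable def Sig3 (n : ℕ) (W : (Fin n → ℝ) → (Fin n → ℝ) → ℝ)
    (x x' : Fin n → ℝ) (k l s : Fin n) : ℝ :=
  pd n k (fun z => pd n l (fun z2 => pd n s (fun w => W z2 w) x') z) x

/-- The Christoffel symbol `Γⁱ_{kl}(x,x') = Σ_s Σ^{is'} Σ_{,kls'}`, where `Σ^{is'}` is
the inverse of the fundamental metric tensor (`Σ_s Σ^{is'}Σ_{ls'} = δⁱₗ`). -/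
noncomputable def Gamma (n : ℕ) (W : (Fin n → ℝ) → (Fin n → ℝ) → ℝ)
    (x x' : Fin n → ℝ) (i k l : Fin n) : ℝ :=
  ∑ s : Fin n, ((Sig2 n W x x')ᵀ)⁻¹ i s * Sig3 n W x x' k l s

/-! ### Auxiliary lemmas -/

private lemma pd_sum {n : ℕ} {ι : Type*} (u : Finset ι) (m : Fin n) (f : ι → (Fin n → ℝ) → ℝ)
    (x : Fin n → ℝ) (hf : ∀ t ∈ u, DifferentiableAt ℝ (f t) x) :
    pd n m (fun z => ∑ t ∈ u, f t z) x = ∑ t ∈ u, pd n m (f t) x := by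
  simp only [pd, fderiv_fun_sum hf, ContinuousLinearMap.coe_sum', Finset.sum_apply]

private lemma pd_mul {n : ℕ} (m : Fin n) (f g : (Fin n → ℝ) → ℝ) (x : Fin n → ℝ)
    (hf : DifferentiableAt ℝ f x) (hg : DifferentiableAt ℝ g x) :
    pd n m (fun z => f z * g z) x = pd n m f x * g x + f x * pd n m g x := by
  simp only [pd, fderiv_fun_mul hf hg, ContinuousLinearMap.add_apply, ContinuousLinearMap.smul_apply,
    smul_eq_mul]
  ring

private lemma pd_const {n : ℕ} (m : Fin n) (c : ℝ) (x : Fin n → ℝ) :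
    pd n m (fun _ => c) x = 0 := by
  simp [pd]

private lemma pd_contDiff {n : ℕ} {f : (Fin n → ℝ) → ℝ} {m k : WithTop ℕ∞} (hf : ContDiff ℝ m f)
    (h : k + 1 ≤ m) (c : Fin n) : ContDiff ℝ k (fun z => pd n c f z) :=
  (hf.fderiv_right h).clm_apply contDiff_const

private lemma pd_swap {n : ℕ} {f : (Fin n → ℝ) → ℝ} (hf : ContDiff ℝ 2 f) (k l : Fin n)
    (x : Fin n → ℝ) :
    pd n k (fun z => pd n l f z) x = pd n l (fun z => pd n k f z) x := by
  have hd : DifferentiableAt ℝ (fderiv ℝ f) x :=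
    ((hf.fderiv_right (m := 1) (by norm_num)).differentiable one_ne_zero).differentiableAt
  have key : ∀ a b : Fin n, pd n a (fun z => pd n b f z) x
      = fderiv ℝ (fderiv ℝ f) x (Pi.single a 1) (Pi.single b 1) := by
    intro a b
    have h4 : fderiv ℝ (fun z => pd n b f z) x
        = ((fderiv ℝ f x).comp (0 : (Fin n → ℝ) →L[ℝ] (Fin n → ℝ))
          + (fderiv ℝ (fderiv ℝ f) x).flip (Pi.single b 1)) :=
      (hd.hasFDerivAt.clm_apply (hasFDerivAt_const _ _)).fderiv
    rw [pd, h4]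
    simp
  rw [key, key]
  exact (hf.contDiffAt.isSymmSndFDerivAt (by simp)) _ _

private lemma pd_swap13 {n : ℕ} {f : (Fin n → ℝ) → ℝ} (hf : ContDiff ℝ 3 f) (a b c : Fin n)
    (x : Fin n → ℝ) :
    pd n a (fun z => pd n b (fun w => pd n c f w) z) x
      = pd n c (fun z => pd n b (fun w => pd n a f w) z) x := by
  have hf2 : ContDiff ℝ 2 f := hf.of_le (by norm_num)
  have hpd : ∀ d : Fin n, ContDiff ℝ 2 (fun w => pd n d f w) := fun d =>
    pd_contDiff hf (by norm_num) d
  calc pd n a (fun z => pd n b (fun w => pd n c f w) z) x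
      = pd n b (fun z => pd n a (fun w => pd n c f w) z) x := pd_swap (hpd c) a b x
    _ = pd n b (fun z => pd n c (fun w => pd n a f w) z) x := by
        congr 1; funext z; exact pd_swap hf2 a c z
    _ = pd n c (fun z => pd n b (fun w => pd n a f w) z) x := pd_swap (hpd a) b c x

private lemma diffAt_finset_prod {n : ℕ} {ι : Type*} [DecidableEq ι] (u : Finset ι)
    (f : ι → (Fin n → ℝ) → ℝ) (x : Fin n → ℝ) (h : ∀ i ∈ u, DifferentiableAt ℝ (f i) x) :
    DifferentiableAt ℝ (fun z => ∏ i ∈ u, f i z) x := by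
  induction u using Finset.induction_on with
  | empty => simp
  | @insert a u ha ih =>
    simp only [Finset.prod_insert ha]
    exact (h a (Finset.mem_insert_self a u)).mul
      (ih fun i hi => h i (Finset.mem_insert_of_mem hi))

private lemma diffAt_det {n : ℕ} (M : (Fin n → ℝ) → Matrix (Fin n) (Fin n) ℝ) (x : Fin n → ℝ)
    (h : ∀ i j, DifferentiableAt ℝ (fun z => M z i j) x) :
    DifferentiableAt ℝ (fun z => (M z).det) x := by
  have hdet : (fun z => (M z).det)
      = fun z => ∑ σ : Equiv.Perm (Fin n),
          ((Equiv.Perm.sign σ : ℤ) : ℝ) * ∏ i, M z (σ i) i := by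
    funext z; rw [Matrix.det_apply']
  rw [hdet]
  exact DifferentiableAt.fun_sum fun σ _ =>
    ((diffAt_finset_prod Finset.univ (fun i z => M z (σ i) i) x
      (fun i _ => h (σ i) i)).const_mul _)

private noncomputable def gf (n : ℕ) (W : (Fin n → ℝ) → (Fin n → ℝ) → ℝ)
    (x' : Fin n → ℝ) (s : Fin n) : (Fin n → ℝ) → ℝ :=
  fun z => pd n s (fun w => W z w) x'

private lemma gf_contDiff {n : ℕ} {W : (Fin n → ℝ) → (Fin n → ℝ) → ℝ}
    (hreg : ContDiff ℝ 4 (fun p : (Fin n → ℝ) × (Fin n → ℝ) => W p.1 p.2))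
    (x' : Fin n → ℝ) (s : Fin n) : ContDiff ℝ 3 (gf n W x' s) := by
  have h1 : ContDiff ℝ 3 (fun z : Fin n → ℝ => fderiv ℝ (fun w => W z w) x') :=
    ContDiff.fderiv (f := fun z w => W z w) (g := fun _ => x') hreg contDiff_const (by norm_num)
  exact h1.clm_apply contDiff_const

private noncomputable def Bm (n : ℕ) (W : (Fin n → ℝ) → (Fin n → ℝ) → ℝ)
    (x' z : Fin n → ℝ) : Matrix (Fin n) (Fin n) ℝ :=
  ((Sig2 n W z x')ᵀ)⁻¹

section Main

variable {n : ℕ} {W : (Fin n → ℝ) → (Fin n → ℝ) → ℝ} {x' : Fin n → ℝ}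

private lemma Sig2_contDiff (hreg : ContDiff ℝ 4 (fun p : (Fin n → ℝ) × (Fin n → ℝ) => W p.1 p.2))
    (a b : Fin n) : ContDiff ℝ 2 (fun z => Sig2 n W z x' a b) :=
  pd_contDiff (gf_contDiff hreg x' b) (by norm_num) a

private lemma Sig3_symm (z : Fin n → ℝ)
    (hreg : ContDiff ℝ 4 (fun p : (Fin n → ℝ) × (Fin n → ℝ) => W p.1 p.2))
    (k l t : Fin n) : Sig3 n W z x' k l t = Sig3 n W z x' l k t :=
  pd_swap ((gf_contDiff hreg x' t).of_le (by norm_num)) k l z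

private lemma hBA (hinv : ∀ z, IsUnit (Sig2 n W z x').det) (z : Fin n → ℝ) (i j : Fin n) :
    ∑ t : Fin n, Bm n W x' z i t * Sig2 n W z x' j t = if i = j then 1 else 0 := by
  have h : IsUnit ((Sig2 n W z x')ᵀ).det := by rw [Matrix.det_transpose]; exact hinv z
  have h1 := Matrix.nonsing_inv_mul _ h
  have h2 : ((((Sig2 n W z x')ᵀ)⁻¹ * (Sig2 n W z x')ᵀ) i j) = (1 : Matrix (Fin n) (Fin n) ℝ) i j := by
    rw [h1]
  simpa [Matrix.mul_apply, Matrix.transpose_apply, Matrix.one_apply, Bm] using h2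

private lemma hAB (hinv : ∀ z, IsUnit (Sig2 n W z x').det) (z : Fin n → ℝ) (t j : Fin n) :
    ∑ l : Fin n, Sig2 n W z x' l t * Bm n W x' z l j = if t = j then 1 else 0 := by
  have h : IsUnit ((Sig2 n W z x')ᵀ).det := by rw [Matrix.det_transpose]; exact hinv z
  have h1 := Matrix.mul_nonsing_inv _ h
  have h2 : (((Sig2 n W z x')ᵀ * ((Sig2 n W z x')ᵀ)⁻¹) t j) = (1 : Matrix (Fin n) (Fin n) ℝ) t j := by
    rw [h1]
  simpa [Matrix.mul_apply, Matrix.transpose_apply, Matrix.one_apply, Bm] using h2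

private lemma Bm_diffAt (hreg : ContDiff ℝ 4 (fun p : (Fin n → ℝ) × (Fin n → ℝ) => W p.1 p.2))
    (hinv : ∀ z, IsUnit (Sig2 n W z x').det) (x : Fin n → ℝ) (i s : Fin n) :
    DifferentiableAt ℝ (fun z => Bm n W x' z i s) x := by
  have hA : ∀ a b : Fin n, DifferentiableAt ℝ (fun z => Sig2 n W z x' a b) x := fun a b =>
    ((Sig2_contDiff hreg a b).differentiable (by norm_num)).differentiableAt
  have heq : (fun z => Bm n W x' z i s) = fun z =>
      ((Sig2 n W z x').det)⁻¹ * ((Sig2 n W z x')ᵀ.updateRow s (Pi.single i 1)).det := by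
    funext z
    rw [Bm, Matrix.inv_def, Matrix.smul_apply, Matrix.adjugate_apply, smul_eq_mul,
      Matrix.det_transpose, Ring.inverse_eq_inv]
  rw [heq]
  apply DifferentiableAt.mul
  · exact (diffAt_det _ x hA).inv (hinv x).ne_zero
  · apply diffAt_det
    intro a b
    by_cases hc : a = s
    · simp [Matrix.updateRow_apply, hc]
    · simpa [Matrix.updateRow_apply, hc, Matrix.transpose_apply] using hA b a

private lemma pd_sum_mul (m : Fin n) (f g : Fin n → (Fin n → ℝ) → ℝ) (x : Fin n → ℝ)
    (hf : ∀ t, DifferentiableAt ℝ (f t) x) (hg : ∀ t, DifferentiableAt ℝ (g t) x) :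
    pd n m (fun z => ∑ t : Fin n, f t z * g t z) x
      = ∑ t : Fin n, (pd n m (f t) x * g t x + f t x * pd n m (g t) x) := by
  calc pd n m (fun z => ∑ t : Fin n, f t z * g t z) x
      = ∑ t : Fin n, pd n m (fun z => f t z * g t z) x :=
        pd_sum Finset.univ m (fun t z => f t z * g t z) x (fun t _ => (hf t).mul (hg t))
    _ = ∑ t : Fin n, (pd n m (f t) x * g t x + f t x * pd n m (g t) x) :=
        Finset.sum_congr rfl fun t _ => pd_mul m (f t) (g t) x (hf t) (hg t)

private lemma pd_Bm (hreg : ContDiff ℝ 4 (fun p : (Fin n → ℝ) × (Fin n → ℝ) => W p.1 p.2))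
    (hinv : ∀ z, IsUnit (Sig2 n W z x').det) (x : Fin n → ℝ) (m' i j : Fin n) :
    pd n m' (fun z => Bm n W x' z i j) x
      = -∑ l : Fin n, Gamma n W x x' i m' l * Bm n W x' x l j := by
  have hA : ∀ a b : Fin n, DifferentiableAt ℝ (fun z => Sig2 n W z x' a b) x := fun a b =>
    ((Sig2_contDiff hreg a b).differentiable (by norm_num)).differentiableAt
  have hB : ∀ a b : Fin n, DifferentiableAt ℝ (fun z => Bm n W x' z a b) x :=
    Bm_diffAt hreg hinv x
  have h1 : ∀ l : Fin n,
      ∑ t : Fin n, (pd n m' (fun z => Bm n W x' z i t) x * Sig2 n W x x' l t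
        + Bm n W x' x i t * pd n m' (fun z => Sig2 n W z x' l t) x) = 0 := by
    intro l
    have h0 : pd n m' (fun z => ∑ t : Fin n, Bm n W x' z i t * Sig2 n W z x' l t) x = 0 := by
      have he : (fun z => ∑ t : Fin n, Bm n W x' z i t * Sig2 n W z x' l t)
          = fun _ => if i = l then (1:ℝ) else 0 := funext fun z => hBA hinv z i l
      rw [he]; exact pd_const m' _ x
    rw [← pd_sum_mul m' (fun t z => Bm n W x' z i t) (fun t z => Sig2 n W z x' l t) x
      (fun t => hB i t) (fun t => hA l t)]
    exact h0
  have h2 : ∀ l : Fin n,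
      ∑ t : Fin n, pd n m' (fun z => Bm n W x' z i t) x * Sig2 n W x x' l t
        = - Gamma n W x x' i m' l := by
    intro l
    have h1l := h1 l
    rw [Finset.sum_add_distrib] at h1l
    have hG : Gamma n W x x' i m' l
        = ∑ t : Fin n, Bm n W x' x i t * pd n m' (fun z => Sig2 n W z x' l t) x := rfl
    linarith [h1l]
  have h3 : pd n m' (fun z => Bm n W x' z i j) x
      = ∑ t : Fin n, pd n m' (fun z => Bm n W x' z i t) x * (if t = j then (1:ℝ) else 0) := by
    simp [mul_ite]
  rw [h3]
  calc ∑ t : Fin n, pd n m' (fun z => Bm n W x' z i t) x * (if t = j then (1:ℝ) else 0)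
      = ∑ t : Fin n, pd n m' (fun z => Bm n W x' z i t) x
          * (∑ l : Fin n, Sig2 n W x x' l t * Bm n W x' x l j) := by
        refine Finset.sum_congr rfl fun t _ => ?_
        rw [hAB hinv x t j]
    _ = ∑ t : Fin n, ∑ l : Fin n,
          (pd n m' (fun z => Bm n W x' z i t) x * Sig2 n W x x' l t) * Bm n W x' x l j := by
        simp [Finset.mul_sum, mul_assoc]
    _ = ∑ l : Fin n, (∑ t : Fin n,
          pd n m' (fun z => Bm n W x' z i t) x * Sig2 n W x x' l t) * Bm n W x' x l j := by
        rw [Finset.sum_comm]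
        simp [Finset.sum_mul]
    _ = -∑ l : Fin n, Gamma n W x x' i m' l * Bm n W x' x l j := by
        rw [← Finset.sum_neg_distrib]
        refine Finset.sum_congr rfl fun l _ => ?_
        rw [h2 l]
        ring

end Main

section Final

variable {n : ℕ} {W : (Fin n → ℝ) → (Fin n → ℝ) → ℝ} {x' : Fin n → ℝ}

private lemma Gamma_eq_sum (x : Fin n → ℝ) (a k l' : Fin n) :
    Gamma n W x x' a k l' = ∑ t : Fin n, Bm n W x' x a t * Sig3 n W x x' k l' t := rfl

private lemma key_expand (hreg : ContDiff ℝ 4 (fun p : (Fin n → ℝ) × (Fin n → ℝ) => W p.1 p.2))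
    (hinv : ∀ z, IsUnit (Sig2 n W z x').det) (x : Fin n → ℝ) (s m'' k l' : Fin n) :
    pd n m'' (fun z => Gamma n W z x' s k l') x
      = -(∑ j : Fin n, Gamma n W x x' s m'' j * Gamma n W x x' j k l')
        + ∑ t : Fin n, Bm n W x' x s t * pd n m'' (fun z => Sig3 n W z x' k l' t) x := by
  have hB : ∀ a b : Fin n, DifferentiableAt ℝ (fun z => Bm n W x' z a b) x :=
    Bm_diffAt hreg hinv x
  have hS3d : ∀ t : Fin n, DifferentiableAt ℝ (fun z => Sig3 n W z x' k l' t) x := fun t =>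
    ((pd_contDiff (m := 2) (k := 1) (Sig2_contDiff hreg l' t) (by norm_num) k).differentiable
      one_ne_zero).differentiableAt
  have hGe : (fun z => Gamma n W z x' s k l')
      = fun z => ∑ t : Fin n, Bm n W x' z s t * Sig3 n W z x' k l' t := rfl
  rw [hGe, pd_sum_mul m'' (fun t z => Bm n W x' z s t) (fun t z => Sig3 n W z x' k l' t) x
    (fun t => hB s t) hS3d, Finset.sum_add_distrib]
  congr 1
  calc ∑ t : Fin n, pd n m'' (fun z => Bm n W x' z s t) x * Sig3 n W x x' k l' t
      = ∑ t : Fin n, (-∑ j : Fin n, Gamma n W x x' s m'' j * Bm n W x' x j t)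
          * Sig3 n W x x' k l' t := by
        refine Finset.sum_congr rfl fun t _ => ?_
        rw [pd_Bm hreg hinv x m'' s t]
    _ = -(∑ t : Fin n, ∑ j : Fin n, Gamma n W x x' s m'' j
          * (Bm n W x' x j t * Sig3 n W x x' k l' t)) := by
        rw [← Finset.sum_neg_distrib]
        refine Finset.sum_congr rfl fun t _ => ?_
        rw [neg_mul, Finset.sum_mul]
        simp [mul_assoc]
    _ = -(∑ j : Fin n, Gamma n W x x' s m'' j
          * ∑ t : Fin n, Bm n W x' x j t * Sig3 n W x x' k l' t) := by
        rw [Finset.sum_comm]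
        simp [Finset.mul_sum]
    _ = -(∑ j : Fin n, Gamma n W x x' s m'' j * Gamma n W x x' j k l') := by
        refine congrArg Neg.neg (Finset.sum_congr rfl fun j _ => ?_)
        rw [Gamma_eq_sum x j k l']

end Final

/-- The Riemann–Christoffel curvature tensor built from the Christoffel symbol
`Γⁱ_{kl}(x,x')` (derivatives in `x`) vanishes identically. -/
theorem curvature_of_two_point_christoffel_vanishes
    (n : ℕ) (W : (Fin n → ℝ) → (Fin n → ℝ) → ℝ)
    (hreg : ContDiff ℝ 4 (fun p : (Fin n → ℝ) × (Fin n → ℝ) => W p.1 p.2))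
    (hinv : ∀ x x' : Fin n → ℝ, IsUnit (Sig2 n W x x').det) :
    ∀ (x x' : Fin n → ℝ) (s i l m : Fin n),
      pd n m (fun z => Gamma n W z x' s i l) x
        - pd n l (fun z => Gamma n W z x' s i m) x
        + (∑ j : Fin n, (Gamma n W x x' j i l * Gamma n W x x' s j m
            - Gamma n W x x' j i m * Gamma n W x x' s j l)) = 0 := by
  intro x x' s i l m
  have hinv' : ∀ z, IsUnit (Sig2 n W z x').det := fun z => hinv z x'
  rw [key_expand hreg hinv' x s m i l, key_expand hreg hinv' x s l i m]
  have hT : ∑ t : Fin n, Bm n W x' x s t * pd n m (fun z => Sig3 n W z x' i l t) x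
      = ∑ t : Fin n, Bm n W x' x s t * pd n l (fun z => Sig3 n W z x' i m t) x := by
    refine Finset.sum_congr rfl fun t _ => ?_
    have h13 := pd_swap13 (gf_contDiff hreg x' t) m i l x
    rw [show pd n m (fun z => Sig3 n W z x' i l t) x
        = pd n l (fun z => Sig3 n W z x' i m t) x from h13]
  rw [hT]
  have hGs : ∀ a k l' : Fin n, Gamma n W x x' a k l' = Gamma n W x x' a l' k := fun a k l' =>
    Finset.sum_congr rfl fun t _ => by rw [Sig3_symm x hreg k l' t]
  have e1 : ∑ j : Fin n, Gamma n W x x' s m j * Gamma n W x x' j i l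
      = ∑ j : Fin n, Gamma n W x x' j i l * Gamma n W x x' s j m :=
    Finset.sum_congr rfl fun j _ => by rw [hGs s m j]; ring
  have e2 : ∑ j : Fin n, Gamma n W x x' s l j * Gamma n W x x' j i m
      = ∑ j : Fin n, Gamma n W x x' j i m * Gamma n W x x' s j l :=
    Finset.sum_congr rfl fun j _ => by rw [hGs s l j]; ring
  rw [Finset.sum_sub_distrib, ← e1, ← e2]
  ring
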